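/- Let E = {a, x, y, z, b} with the three matroids M₁, M₂, M₃ defined symmetrically (a 2-set is independent in Mᵢ unless it is {a,x}, {a,y}, {a,z} respectively; a 3-set is independent in Mᵢ iff all of its 2-subsets are and it contains z, x, y respectively; no 4-set is independent), and with orders given by weights w₁(a)=1, w₁(x)=3, w₁(y)=w₁(z)=2, w₁(b)=4 (and symmetrically for w₂ with y heaviest among x,y,z and w₃ with z heaviest). Then there is no set T ⊆ E that is independent in all three matroids and satisfies E = D_{M₁}(T) ∪ D_{M₂}(T) ∪ D_{M₃}(T). -/
import Mathlib


open Finset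
open scoped Classical

structure FinMatroid (α : Type) [DecidableEq α] where
  E : Finset α
  Indep : Finset α → Prop
  indep_empty : Indep ∅
  subset_ground : ∀ ⦃X⦄, Indep X → X ⊆ E
  indep_mono : ∀ ⦃X Y⦄, X ⊆ Y → Indep Y → Indep X
  indep_exchange : ∀ ⦃X Y⦄, Indep X → Indep Y → X.card < Y.card →
    ∃ e ∈ Y \ X, Indep (insert e X)

namespace FinMatroid

variable {α : Type} [DecidableEq α]

noncomputable def rank (M : FinMatroid α) (X : Finset α) : ℕ :=
  sSup {n | ∃ Y ⊆ X, M.Indep Y ∧ Y.card = n}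

def spn (M : FinMatroid α) (X : Finset α) : Set α :=
  {e | e ∈ M.E ∧ M.rank (insert e X) = M.rank X}

end FinMatroid

def Dominates {α : Type} [DecidableEq α] (M : FinMatroid α) (lt : α → α → Prop)
    (E' : Finset α) (e : α) : Prop :=
  e ∈ E' ∨ ∃ C : Finset α, C ⊆ E' ∧ e ∈ M.spn C ∧ ∀ c ∈ C, lt c e

/-- The element paired with `a = 0` in the forbidden pair of matroid `i`:
`x, y, z` respectively. -/
def pairElt : Fin 3 → Fin 5 := ![1, 2, 3]

/-- The required element for independent 3-sets of matroid `i`: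
`z, x, y` respectively. -/
def reqElt : Fin 3 → Fin 5 := ![3, 1, 2]

def Indep3 (i : Fin 3) (X : Finset (Fin 5)) : Prop :=
  X.card ≤ 1 ∨ (X.card = 2 ∧ X ≠ {0, pairElt i}) ∨
    (X.card = 3 ∧ reqElt i ∈ X ∧ ¬ (({0, pairElt i} : Finset (Fin 5)) ⊆ X))

/-- The weight functions `w₁, w₂, w₃` on `{a, x, y, z, b}`. -/
noncomputable def wt : Fin 3 → Fin 5 → ℝ :=
  ![![1, 3, 2, 2, 4], ![1, 2, 3, 2, 4], ![1, 2, 2, 3, 4]]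

/-- `e <ᵢ f` iff `e` has strictly larger `wᵢ`-weight, ties broken by later
arrival in the order `a, x, y, z, b`. -/
def ltOrd (i : Fin 3) (e f : Fin 5) : Prop :=
  wt i f < wt i e ∨ (wt i e = wt i f ∧ (f : ℕ) < (e : ℕ))

/-! ### Auxiliary computable versions -/

instance Indep3.dec : ∀ i, DecidablePred (Indep3 i) := fun i X => by
  unfold Indep3; infer_instance

/-- Computable rank. -/
def rk3 (i : Fin 3) (X : Finset (Fin 5)) : ℕ :=
  (X.powerset.filter (Indep3 i)).sup Finset.card

/-- Natural-number weights. -/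
def wtN : Fin 3 → Fin 5 → ℕ := ![![1, 3, 2, 2, 4], ![1, 2, 3, 2, 4], ![1, 2, 2, 3, 4]]

def ltN (i : Fin 3) (e f : Fin 5) : Prop :=
  wtN i f < wtN i e ∨ (wtN i e = wtN i f ∧ (f : ℕ) < (e : ℕ))

instance (i : Fin 3) : DecidableRel (ltN i) := fun e f => by unfold ltN; infer_instance

def DomN (i : Fin 3) (T : Finset (Fin 5)) (e : Fin 5) : Prop :=
  e ∈ T ∨ ∃ C ∈ T.powerset, rk3 i (insert e C) = rk3 i C ∧ ∀ c ∈ C, ltN i c e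

instance (i : Fin 3) (T : Finset (Fin 5)) (e : Fin 5) : Decidable (DomN i T e) := by
  unfold DomN; infer_instance

lemma wt_eq_wtN (i : Fin 3) (e : Fin 5) : wt i e = (wtN i e : ℝ) := by
  fin_cases i <;> fin_cases e <;> norm_num [wt, wtN]

lemma ltOrd_iff_ltN (i : Fin 3) (e f : Fin 5) : ltOrd i e f ↔ ltN i e f := by
  unfold ltOrd ltN
  rw [wt_eq_wtN, wt_eq_wtN, Nat.cast_lt, Nat.cast_inj]

lemma rank_eq_rk3 (i : Fin 3) (M : FinMatroid (Fin 5))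
    (hI : ∀ X, M.Indep X ↔ Indep3 i X) (X : Finset (Fin 5)) :
    M.rank X = rk3 i X := by
  have hne : (X.powerset.filter (Indep3 i)).Nonempty := by
    refine ⟨∅, Finset.mem_filter.2 ⟨Finset.mem_powerset.2 (Finset.empty_subset X), ?_⟩⟩
    exact Or.inl (by simp)
  obtain ⟨Y, hY, hYsup⟩ := Finset.exists_mem_eq_sup _ hne Finset.card
  rw [Finset.mem_filter, Finset.mem_powerset] at hY
  refine IsGreatest.csSup_eq ⟨⟨Y, hY.1, (hI Y).2 hY.2, hYsup.symm⟩, ?_⟩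
  rintro n ⟨Z, hZX, hZind, rfl⟩
  exact Finset.le_sup (Finset.mem_filter.2 ⟨Finset.mem_powerset.2 hZX, (hI Z).1 hZind⟩)

set_option maxRecDepth 10000 in
lemma key : ∀ T : Finset (Fin 5), (∀ i, Indep3 i T) →
    ∃ e : Fin 5, ∀ i : Fin 3, ¬ DomN i T e := by decide

theorem stmt16 (M : Fin 3 → FinMatroid (Fin 5))
    (hE : ∀ i, (M i).E = Finset.univ)
    (hI : ∀ i X, (M i).Indep X ↔ Indep3 i X) :
    ¬ ∃ T : Finset (Fin 5), (∀ i, (M i).Indep T) ∧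
        ∀ e : Fin 5, ∃ i, Dominates (M i) (ltOrd i) T e := by
  rintro ⟨T, hT, hdom⟩
  obtain ⟨e, he⟩ := key T (fun i => (hI i T).1 (hT i))
  obtain ⟨i, hd⟩ := hdom e
  apply he i
  rcases hd with h | ⟨C, hCT, hspn, hlt⟩
  · exact Or.inl h
  · refine Or.inr ⟨C, Finset.mem_powerset.2 hCT, ?_, fun c hc => (ltOrd_iff_ltN i c e).1 (hlt c hc)⟩
    have := hspn.2
    rwa [rank_eq_rk3 i (M i) (hI i), rank_eq_rk3 i (M i) (hI i)] at this
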